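/- Let a, b ∈ ℝ with a > 0 and c > 0, and M : [0,∞) → ℝ be C² with M″(t) ≥ c·M(t) − b for all t ≥ 0, and suppose M is bounded. Then M(t) ≤ b/c + (M(0) − b/c)·e^{−√c·t} for all t ≥ 0. -/

import Mathlib

/-!
Put `N = M - b / c` and `s = √c`, so that `N'' ≥ s² N`. The quantity `v = N' + s N` then
satisfies `v' ≥ s v`, so by Grönwall it grows like `e^{s t}` as soon as it is positive somewhere,
and this forces `N` to grow like `e^{s t}` too, contradicting boundedness. Hence `v ≤ 0`, that is
`N' ≤ -s N`, and Grönwall once more gives `N t ≤ N 0 · e^{-s t}`.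
-/

open Real Set Filter

theorem le_mul_exp_of_deriv_le {f f' : ℝ → ℝ} {K a : ℝ}
    (hf : ∀ t ≥ a, HasDerivAt f (f' t) t) (bound : ∀ t ≥ a, f' t ≤ K * f t)
    {t : ℝ} (ht : a ≤ t) : f t ≤ f a * exp (K * (t - a)) := by
  have h := le_gronwallBound_of_liminf_deriv_right_le (b := t) (δ := f a) (ε := 0)
    (fun x hx => (hf x hx.1).continuousAt.continuousWithinAt)
    (fun x hx _ hr => (hf x hx.1).hasDerivWithinAt.liminf_right_slope_le hr) le_rfl
    (fun x hx => by simpa using bound x hx.1) t ⟨ht, le_rfl⟩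
  rwa [gronwallBound_ε0] at h

theorem mul_exp_le_of_mul_le_deriv {f f' : ℝ → ℝ} {K a : ℝ}
    (hf : ∀ t ≥ a, HasDerivAt f (f' t) t) (bound : ∀ t ≥ a, K * f t ≤ f' t)
    {t : ℝ} (ht : a ≤ t) : f a * exp (K * (t - a)) ≤ f t := by
  have h := le_mul_exp_of_deriv_le (f := -f) (f' := -f') (K := K) (fun t ht => (hf t ht).neg)
    (fun t ht => by simpa using bound t ht) ht
  simpa using h

theorem not_bddAbove_of_mul_exp_le_deriv_add_mul {N N' : ℝ → ℝ} {s A a : ℝ} (hs : 0 < s)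
    (hA : 0 < A) (hN : ∀ t ≥ a, HasDerivAt N (N' t) t)
    (bound : ∀ t ≥ a, A * exp (s * t) ≤ N' t + s * N t) : ¬BddAbove (N '' Ici a) := by
  -- `u' + s u = N' + s N - A e^{s t} ≥ 0`, so `u` cannot decay faster than `e^{-s t}`.
  set u : ℝ → ℝ := fun t => N t - A / (2 * s) * exp (s * t)
  have hexp : ∀ t, HasDerivAt (fun t => exp (s * t)) (s * exp (s * t)) t := fun t => by
    simpa [mul_comm] using ((hasDerivAt_id t).const_mul s).exp
  have hu : ∀ t ≥ a, HasDerivAt u (N' t - A / (2 * s) * (s * exp (s * t))) t := fun t ht =>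
    (hN t ht).sub ((hexp t).const_mul _)
  have hu_deriv : ∀ t ≥ a, -s * u t ≤ N' t - A / (2 * s) * (s * exp (s * t)) := by
    intro t ht
    have h₁ : A / (2 * s) * (s * exp (s * t)) = A / 2 * exp (s * t) := by field_simp
    have h₂ : -s * u t = -(s * N t) + A / 2 * exp (s * t) := by simp only [u]; field_simp; ring
    linarith [bound t ht]
  have hu_lower : ∀ t ≥ a, A / (2 * s) * exp (s * t) - |u a| ≤ N t := by
    intro t ht
    have h := mul_exp_le_of_mul_le_deriv (K := -s) hu hu_deriv ht
    have hdecay : exp (-s * (t - a)) ≤ 1 := exp_le_one_iff.mpr (by nlinarith)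
    have : -|u a| ≤ u a * exp (-s * (t - a)) :=
      (neg_le_neg (by
        rw [abs_mul, abs_exp]
        exact mul_le_of_le_one_right (abs_nonneg _) hdecay)).trans (neg_abs_le _)
    simp only [u] at h this ⊢
    linarith
  rintro ⟨B, hB⟩
  have hgrow : Tendsto (fun t => A / (2 * s) * exp (s * t)) atTop atTop :=
    (tendsto_exp_atTop.comp (tendsto_id.const_mul_atTop hs)).const_mul_atTop (by positivity)
  obtain ⟨t, hBt, hat⟩ :=
    ((hgrow.eventually_gt_atTop (B + |u a|)).and (eventually_ge_atTop a)).exists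
  linarith [hB (mem_image_of_mem N (mem_Ici.mpr hat)), hu_lower t hat]

theorem le_mul_exp_neg_of_sq_mul_le_deriv_deriv {N N' N'' : ℝ → ℝ} {s : ℝ} (hs : 0 < s)
    (hN : ∀ t ≥ 0, HasDerivAt N (N' t) t) (hN' : ∀ t ≥ 0, HasDerivAt N' (N'' t) t)
    (hineq : ∀ t ≥ 0, s ^ 2 * N t ≤ N'' t) (hbdd : BddAbove (N '' Ici 0)) :
    ∀ t ≥ 0, N t ≤ N 0 * exp (-s * t) := by
  set v : ℝ → ℝ := fun t => N' t + s * N t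
  have hv : ∀ t ≥ 0, HasDerivAt v (N'' t + s * N' t) t := fun t ht =>
    (hN' t ht).add ((hN t ht).const_mul s)
  have hv_nonpos : ∀ t ≥ 0, v t ≤ 0 := by
    intro t₀ ht₀
    by_contra! hpos
    refine not_bddAbove_of_mul_exp_le_deriv_add_mul hs (A := v t₀ * exp (-s * t₀))
      (by positivity) (fun t ht => hN t (ht₀.trans ht)) (fun t ht => ?_)
      (hbdd.mono (image_mono (Ici_subset_Ici.mpr ht₀)))
    have h := mul_exp_le_of_mul_le_deriv (K := s) (fun t ht => hv t (ht₀.trans ht))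
      (fun t ht => by nlinarith [hineq t (ht₀.trans ht)]) ht
    rwa [mul_assoc, ← exp_add, show -s * t₀ + s * t = s * (t - t₀) by ring]
  intro t ht
  simpa using le_mul_exp_of_deriv_le (K := -s) hN
    (fun t ht => by linarith [hv_nonpos t ht]) ht

theorem stmt_14 (b c : ℝ) (hc : 0 < c) (M : ℝ → ℝ) (hM : ContDiff ℝ 2 M)
    (hbdd : ∃ B, ∀ t, 0 ≤ t → |M t| ≤ B)
    (hineq : ∀ t, 0 ≤ t → c * M t - b ≤ deriv (deriv M) t) :
    ∀ t, 0 ≤ t → M t ≤ b / c + (M 0 - b / c) * Real.exp (-Real.sqrt c * t) := by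
  obtain ⟨B, hB⟩ := hbdd
  have hM₁ : Differentiable ℝ M := hM.differentiable (by norm_num)
  have hM₂ : Differentiable ℝ (deriv M) := (hM.iterate_deriv' 1 1).differentiable (by norm_num)
  have key := le_mul_exp_neg_of_sq_mul_le_deriv_deriv (N := fun t => M t - b / c)
    (sqrt_pos.mpr hc) (fun t _ => (hM₁ t).hasDerivAt.sub_const _)
    (fun t _ => (hM₂ t).hasDerivAt)
    (fun t ht => by
      rw [sq_sqrt hc.le, mul_sub, mul_div_cancel₀ _ hc.ne']
      exact hineq t ht)
    ⟨B - b / c, by rintro _ ⟨t, ht, rfl⟩; linarith [le_abs_self (M t), hB t ht]⟩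
  intro t ht
  linarith [key t ht]
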